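/- Let s ∈ R and let M = (R^4, g) with g(∂x_1,∂x_3)=g(∂x_2,∂x_4)=1, g(∂x_3,∂x_4)=s(x_2^2-x_1^2)/2, g(∂x_3,∂x_3)=s x_1 x_2, g(∂x_4,∂x_4)=-s x_1 x_2. Then the Ricci operator rho satisfies rho(∂x_1) = -s∂x_2, rho(∂x_2) = s∂x_1, rho(∂x_3) = s∂x_4, rho(∂x_4) = -s∂x_3; in particular rho^2 = -s^2 · id, so for s = 1 the Ricci operator defines an almost complex structure. -/

import Mathlib

noncomputable section

open Finset in
/-- Partial derivative in the `i`-th coordinate direction. -/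
def pd {ι : Type*} [Fintype ι] [DecidableEq ι]
    (i : ι) (f : (ι → ℝ) → ℝ) (p : ι → ℝ) : ℝ :=
  fderiv ℝ f p (Pi.single i 1)

/-- Christoffel symbols of the second kind `Γ^k_{ij}` of the metric `g`
(with inverse metric `ginv`). -/
def christoffel {ι : Type*} [Fintype ι] [DecidableEq ι]
    (g ginv : (ι → ℝ) → Matrix ι ι ℝ) (k i j : ι) (p : ι → ℝ) : ℝ :=
  (1 / 2) * ∑ l, ginv p k l *
    (pd i (fun q => g q j l) p + pd j (fun q => g q i l) p - pd l (fun q => g q i j) p)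

/-- Components of the curvature operator of the Levi-Civita connection:
`R(∂_i,∂_j)∂_k = ∑_l (curvOp g ginv i j k l) ∂_l`. -/
def curvOp {ι : Type*} [Fintype ι] [DecidableEq ι]
    (g ginv : (ι → ℝ) → Matrix ι ι ℝ) (i j k l : ι) (p : ι → ℝ) : ℝ :=
  pd i (christoffel g ginv l j k) p - pd j (christoffel g ginv l i k) p
    + ∑ m, christoffel g ginv l i m p * christoffel g ginv m j k p
    - ∑ m, christoffel g ginv l j m p * christoffel g ginv m i k p

/-- The curvature operator extended multilinearly to tangent vectors:
component `l` of `R(v,w)u`. -/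
def curvVec {ι : Type*} [Fintype ι] [DecidableEq ι]
    (g ginv : (ι → ℝ) → Matrix ι ι ℝ) (p : ι → ℝ) (v w u : ι → ℝ) : ι → ℝ :=
  fun l => ∑ i, ∑ j, ∑ k, v i * w j * u k * curvOp g ginv i j k l p

/-- The polarized Jacobi operator `J(v,w)u = (1/2){R(u,v)w + R(u,w)v}`. -/
def jacobiVec {ι : Type*} [Fintype ι] [DecidableEq ι]
    (g ginv : (ι → ℝ) → Matrix ι ι ℝ) (p : ι → ℝ) (v w u : ι → ℝ) : ι → ℝ :=
  fun l => (1 / 2) * (curvVec g ginv p u v w l + curvVec g ginv p u w v l)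

/-- The Ricci tensor `Ric_{ij} = Tr (z ↦ R(z,∂_i)∂_j)`. -/
def ricci {ι : Type*} [Fintype ι] [DecidableEq ι]
    (g ginv : (ι → ℝ) → Matrix ι ι ℝ) (i j : ι) (p : ι → ℝ) : ℝ :=
  ∑ m, curvOp g ginv m i j m p

/-- The Ricci operator (Ricci tensor with one index raised by `g`), as a matrix:
`rho(∂_j) = ∑_i (ricciOp p) i j ∂_i`. -/
def ricciOp {ι : Type*} [Fintype ι] [DecidableEq ι]
    (g ginv : (ι → ℝ) → Matrix ι ι ℝ) (p : ι → ℝ) : Matrix ι ι ℝ :=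
  fun i j => ∑ m, ginv p i m * ricci g ginv m j p

/-- The (0,4) curvature tensor `R_{ijkl} = g(R(∂_i,∂_j)∂_k, ∂_l)`. -/
def curv4 {ι : Type*} [Fintype ι] [DecidableEq ι]
    (g ginv : (ι → ℝ) → Matrix ι ι ℝ) (i j k l : ι) (p : ι → ℝ) : ℝ :=
  ∑ m, curvOp g ginv i j k m p * g p m l

/-- The metric of Theorem 1.9 on `ℝ⁴`: `g(∂x₁,∂x₃) = g(∂x₂,∂x₄) = 1`,
`g(∂x₃,∂x₄) = s(x₂² - x₁²)/2`, `g(∂x₃,∂x₃) = s x₁x₂`, `g(∂x₄,∂x₄) = -s x₁x₂`. -/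
def gSym (s : ℝ) (p : Fin 4 → ℝ) : Matrix (Fin 4) (Fin 4) ℝ :=
  Matrix.of
    ![![0, 0, 1, 0],
      ![0, 0, 0, 1],
      ![1, 0, s * p 0 * p 1, s * ((p 1) ^ 2 - (p 0) ^ 2) / 2],
      ![0, 1, s * ((p 1) ^ 2 - (p 0) ^ 2) / 2, -(s * p 0 * p 1)]]

/-!
The inverse of `gSym s` is explicit, so the Christoffel symbols are polynomials in `x₁, x₂` and
the Ricci tensor can be computed directly. Raising an index turns it into `s • J`, where `J` is
the standard complex structure `∂₁ ↦ -∂₂, ∂₂ ↦ ∂₁, ∂₃ ↦ ∂₄, ∂₄ ↦ -∂₃` of `ℝ⁴`, and `J² = -1`.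
-/

section PartialDerivatives

variable {ι : Type*} [Fintype ι] [DecidableEq ι] {i j : ι} {p : ι → ℝ} {f g : (ι → ℝ) → ℝ}

theorem pd_const (c : ℝ) : pd i (fun _ => c) p = 0 := by simp [pd]

theorem pd_coord : pd i (fun q => q j) p = if j = i then 1 else 0 := by
  have hproj : (fun q : ι → ℝ => q j) = (ContinuousLinearMap.proj j : (ι → ℝ) →L[ℝ] ℝ) := rfl
  rw [pd, hproj, ContinuousLinearMap.fderiv]
  simp [Pi.single_apply]

theorem pd_sub (hf : DifferentiableAt ℝ f p) (hg : DifferentiableAt ℝ g p) :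
    pd i (fun q => f q - g q) p = pd i f p - pd i g p := by
  simp [pd, fderiv_fun_sub hf hg]

theorem pd_neg : pd i (fun q => -f q) p = -pd i f p := by
  simp [pd]

theorem pd_mul (hf : DifferentiableAt ℝ f p) (hg : DifferentiableAt ℝ g p) :
    pd i (fun q => f q * g q) p = pd i f p * g p + f p * pd i g p := by
  simp [pd, fderiv_fun_mul hf hg]
  ring

theorem pd_pow (n : ℕ) (hf : DifferentiableAt ℝ f p) :
    pd i (fun q => f q ^ n) p = n * f p ^ (n - 1) * pd i f p := by
  simp [pd, fderiv_fun_pow n hf]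

theorem pd_div_const (c : ℝ) (hf : DifferentiableAt ℝ f p) :
    pd i (fun q => f q / c) p = pd i f p / c := by
  simp [pd, div_eq_mul_inv, fderiv_mul_const hf]
  ring

end PartialDerivatives

theorem ricciOp_eq_mul {ι : Type*} [Fintype ι] [DecidableEq ι]
    (g ginv : (ι → ℝ) → Matrix ι ι ℝ) (p : ι → ℝ) :
    ricciOp g ginv p = ginv p * Matrix.of (fun i j => ricci g ginv i j p) := by
  ext i j
  simp [ricciOp, Matrix.mul_apply]

def complexStructureMatrix : Matrix (Fin 4) (Fin 4) ℝ :=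
  Matrix.of ![![0, 1, 0, 0], ![-1, 0, 0, 0], ![0, 0, 0, -1], ![0, 0, 1, 0]]

theorem complexStructureMatrix_sq : complexStructureMatrix ^ 2 = -1 := by
  ext i j
  fin_cases i <;> fin_cases j <;>
    simp [complexStructureMatrix, sq, Matrix.mul_apply, Fin.sum_univ_four]

section gSym

variable (s : ℝ) (p : Fin 4 → ℝ)

def gSymInv : Matrix (Fin 4) (Fin 4) ℝ :=
  Matrix.of
    ![![-(s * p 0 * p 1), -(s * ((p 1) ^ 2 - (p 0) ^ 2) / 2), 1, 0],
      ![-(s * ((p 1) ^ 2 - (p 0) ^ 2) / 2), s * p 0 * p 1, 0, 1],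
      ![1, 0, 0, 0],
      ![0, 1, 0, 0]]

theorem gSymInv_mul_gSym : gSymInv s p * gSym s p = 1 := by
  ext i j
  fin_cases i <;> fin_cases j <;>
    simp [gSymInv, gSym, Matrix.mul_apply, Fin.sum_univ_four]

def gSymChristoffel : Fin 4 → Fin 4 → Fin 4 → ℝ :=
  let a := s * p 0 / 2
  let b := s * p 1 / 2
  let c := s ^ 2 * p 0 * (3 * p 1 ^ 2 - p 0 ^ 2) / 4
  let d := s ^ 2 * p 1 * (p 1 ^ 2 - 3 * p 0 ^ 2) / 4
  ![![![0, 0, b, -a], ![0, 0, a, b], ![b, a, c, d], ![-a, b, d, -c]],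
    ![![0, 0, -a, -b], ![0, 0, b, -a], ![-a, b, d, -c], ![-b, -a, -c, -d]],
    ![0, 0, ![0, 0, -b, a], ![0, 0, a, b]],
    ![0, 0, ![0, 0, -a, -b], ![0, 0, -b, a]]]

def gSymRicci : Matrix (Fin 4) (Fin 4) ℝ :=
  Matrix.of
    ![![0, 0, 0, -s],
      ![0, 0, s, 0],
      ![0, s, s ^ 2 * ((p 1) ^ 2 - (p 0) ^ 2) / 2, -(s ^ 2 * p 0 * p 1)],
      ![-s, 0, -(s ^ 2 * p 0 * p 1), -(s ^ 2 * ((p 1) ^ 2 - (p 0) ^ 2) / 2)]]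

theorem christoffel_gSym (k i j : Fin 4) :
    christoffel (gSym s) (gSymInv s) k i j = fun q => gSymChristoffel s q k i j := by
  funext q
  fin_cases k <;> fin_cases i <;> fin_cases j <;>
    simp [christoffel, gSymInv, gSym, gSymChristoffel, Fin.sum_univ_four] <;>
    simp (disch := fun_prop) [pd_const, pd_coord, pd_sub, pd_neg, pd_mul, pd_pow,
      pd_div_const] <;>
    ring

theorem ricci_gSym :
    Matrix.of (fun i j => ricci (gSym s) (gSymInv s) i j p) = gSymRicci s p := by
  ext i j
  fin_cases i <;> fin_cases j <;>
    simp only [Matrix.of_apply, ricci, curvOp, Fin.sum_univ_four, christoffel_gSym] <;>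
    simp [gSymChristoffel, gSymRicci] <;>
    simp (disch := fun_prop) [pd_const, pd_coord, pd_sub, pd_neg, pd_mul, pd_pow,
      pd_div_const] <;>
    ring

theorem ricciOp_gSym : ricciOp (gSym s) (gSymInv s) p = s • complexStructureMatrix := by
  rw [ricciOp_eq_mul, ricci_gSym]
  ext i j
  fin_cases i <;> fin_cases j <;>
    simp [gSymInv, gSymRicci, complexStructureMatrix, Matrix.mul_apply, Fin.sum_univ_four] <;>
    ring

end gSym

theorem eq_gSymInv {s : ℝ} {ginv : (Fin 4 → ℝ) → Matrix (Fin 4) (Fin 4) ℝ}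
    (h : ∀ p, gSym s p * ginv p = 1) : ginv = gSymInv s :=
  funext fun p => (left_inv_eq_right_inv (gSymInv_mul_gSym s p) (h p)).symm

/-- For the metric `gSym s`, the Ricci operator satisfies
`rho(∂x₁) = -s∂x₂`, `rho(∂x₂) = s∂x₁`, `rho(∂x₃) = s∂x₄`, `rho(∂x₄) = -s∂x₃`;
in particular `rho² = -s²·id`, so for `s = 1` the Ricci operator is an almost
complex structure. -/
theorem stmt_17 (s : ℝ)
    (ginv : (Fin 4 → ℝ) → Matrix (Fin 4) (Fin 4) ℝ)
    (hginv : ∀ p, gSym s p * ginv p = 1 ∧ ginv p * gSym s p = 1) :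
    ∀ p : Fin 4 → ℝ,
      ricciOp (gSym s) ginv p =
        Matrix.of
          ![![0, s, 0, 0],
            ![-s, 0, 0, 0],
            ![0, 0, 0, -s],
            ![0, 0, s, 0]] ∧
      ricciOp (gSym s) ginv p ^ 2 = -(s ^ 2) • (1 : Matrix (Fin 4) (Fin 4) ℝ) := by
  obtain rfl : ginv = gSymInv s := eq_gSymInv fun p => (hginv p).1
  intro p
  rw [ricciOp_gSym]
  constructor
  · ext i j
    fin_cases i <;> fin_cases j <;> simp [complexStructureMatrix]
  · rw [smul_pow, complexStructureMatrix_sq, smul_neg, neg_smul]
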